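/- If N is a dense subspace of a bicomplex Hilbert space M and {|m_l⟩} is an orthonormal Schauder basis (over the bicomplex numbers) for N, then {|m_l⟩} is also an orthonormal Schauder basis for M; in particular every |φ⟩ ∈ M satisfies |φ⟩ = Σ_{l=1}^{∞} ⟨m_l|φ⟩|m_l⟩. -/

import Mathlib

/-- Bicomplex numbers `w = z₁ + z₂ i₂` with `z₁ z₂ ∈ ℂ(i₁)`. -/
@[ext] structure BC where
  re : ℂ
  im : ℂ

namespace BC

instance : Zero BC := ⟨⟨0, 0⟩⟩
instance : One BC := ⟨⟨1, 0⟩⟩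
instance : Add BC := ⟨fun s t => ⟨s.re + t.re, s.im + t.im⟩⟩
instance : Neg BC := ⟨fun s => ⟨-s.re, -s.im⟩⟩
instance : Mul BC := ⟨fun s t => ⟨s.re * t.re - s.im * t.im, s.re * t.im + s.im * t.re⟩⟩

@[simp] theorem zero_re : (0 : BC).re = 0 := rfl
@[simp] theorem zero_im : (0 : BC).im = 0 := rfl
@[simp] theorem one_re : (1 : BC).re = 1 := rfl
@[simp] theorem one_im : (1 : BC).im = 0 := rfl
@[simp] theorem add_re (s t : BC) : (s + t).re = s.re + t.re := rfl
@[simp] theorem add_im (s t : BC) : (s + t).im = s.im + t.im := rfl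
@[simp] theorem neg_re (s : BC) : (-s).re = -s.re := rfl
@[simp] theorem neg_im (s : BC) : (-s).im = -s.im := rfl
@[simp] theorem mul_re (s t : BC) : (s * t).re = s.re * t.re - s.im * t.im := rfl
@[simp] theorem mul_im (s t : BC) : (s * t).im = s.re * t.im + s.im * t.re := rfl

instance commRing : CommRing BC where
  add_assoc a b c := by ext <;> simp <;> ring
  zero_add a := by ext <;> simp
  add_zero a := by ext <;> simp
  add_comm a b := by ext <;> simp <;> ring
  left_distrib a b c := by ext <;> simp <;> ring
  right_distrib a b c := by ext <;> simp <;> ring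
  zero_mul a := by ext <;> simp
  mul_zero a := by ext <;> simp
  mul_assoc a b c := by ext <;> simp <;> ring
  one_mul a := by ext <;> simp
  mul_one a := by ext <;> simp
  neg_add_cancel a := by ext <;> simp
  mul_comm a b := by ext <;> simp <;> ring
  nsmul := nsmulRec
  zsmul := zsmulRec

/-- The imaginary unit `i₁`. -/
def i1 : BC := ⟨Complex.I, 0⟩
/-- The imaginary unit `i₂`. -/
def i2 : BC := ⟨0, 1⟩
/-- The hyperbolic unit `j = i₁ i₂`. -/
def jh : BC := i1 * i2
/-- The idempotent `e₁ = (1 + j)/2`. -/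
noncomputable def e1 : BC := ⟨1/2, Complex.I/2⟩
/-- The idempotent `e₂ = (1 - j)/2`. -/
noncomputable def e2 : BC := ⟨1/2, -(Complex.I/2)⟩
/-- The embedding of `ℂ(i₁)` into the bicomplex numbers. -/
def C1 (z : ℂ) : BC := ⟨z, 0⟩
/-- First idempotent component `ẑ₁ = z₁ - z₂ i₁`. -/
def P1 (w : BC) : ℂ := w.re - w.im * Complex.I
/-- Second idempotent component `ẑ₂ = z₁ + z₂ i₁`. -/
def P2 (w : BC) : ℂ := w.re + w.im * Complex.I
/-- The Euclidean `ℝ⁴`-norm `|w| = √(|z₁|² + |z₂|²)`. -/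
noncomputable def enorm (w : BC) : ℝ := Real.sqrt (‖w.re‖ ^ 2 + ‖w.im‖ ^ 2)
/-- The conjugation `w^{†₁} = z̄₁ + z̄₂ i₂`. -/
def dag1 (w : BC) : BC := ⟨starRingEnd ℂ w.re, starRingEnd ℂ w.im⟩
/-- The conjugation `w^{†₂} = z₁ - z₂ i₂`. -/
def dag2 (w : BC) : BC := ⟨w.re, -w.im⟩
/-- The conjugation `w^{†₃} = z̄₁ - z̄₂ i₂`. -/
def dag3 (w : BC) : BC := ⟨starRingEnd ℂ w.re, -(starRingEnd ℂ w.im)⟩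

end BC

/-- A bicomplex scalar product on a module over the bicomplex numbers. -/
structure BCInner (M : Type*) [AddCommGroup M] [Module BC M] where
  inner : M → M → BC
  add_right : ∀ ψ φ χ : M, inner ψ (φ + χ) = inner ψ φ + inner ψ χ
  smul_right : ∀ (s : BC) (ψ φ : M), inner ψ (s • φ) = s * inner ψ φ
  conj_symm : ∀ ψ φ : M, inner ψ φ = BC.dag3 (inner φ ψ)
  hyper_pos : ∀ ψ : M, (BC.P1 (inner ψ ψ)).im = 0 ∧ 0 ≤ (BC.P1 (inner ψ ψ)).re ∧
      (BC.P2 (inner ψ ψ)).im = 0 ∧ 0 ≤ (BC.P2 (inner ψ ψ)).re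
  definite : ∀ ψ : M, inner ψ ψ = 0 → ψ = 0

/-- The norm induced by a bicomplex scalar product:
`‖φ‖ = (1/√2) √((φ₁,φ₁)₁ + (φ₂,φ₂)₂) = |√((φ,φ))|`. -/
noncomputable def bnorm {M : Type*} [AddCommGroup M] [Module BC M] (S : BCInner M) (φ : M) : ℝ :=
  (1 / Real.sqrt 2) * Real.sqrt ((BC.P1 (S.inner φ φ)).re + (BC.P2 (S.inner φ φ)).re)

/-- Completeness of a bicomplex inner product space with respect to the induced norm. -/
def BCComplete {M : Type*} [AddCommGroup M] [Module BC M] (S : BCInner M) : Prop :=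
  ∀ f : ℕ → M, (∀ ε > 0, ∃ N : ℕ, ∀ m ≥ N, ∀ n ≥ N, bnorm S (f m - f n) < ε) →
    ∃ φ : M, Filter.Tendsto (fun n => bnorm S (f n - φ)) Filter.atTop (nhds 0)

/-- Separability: existence of a countable dense subset. -/
def BCSeparable {M : Type*} [AddCommGroup M] [Module BC M] (S : BCInner M) : Prop :=
  ∃ D : Set M, D.Countable ∧ ∀ φ : M, ∀ ε > 0, ∃ ψ ∈ D, bnorm S (φ - ψ) < ε

/-!
Orthonormal expansions are governed by the real inner product `Re Re (ψ, φ)`, whose norm is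
`bnorm`. By Pythagoras, for any bicomplex coefficients `α`,
`‖φ - Σ_{l<n} α_l m_l‖² = ‖φ - Σ_{l<n} (m_l, φ) m_l‖² + Σ_{l<n} |(m_l, φ) - α_l|²`.
Hence the partial Fourier sums are best approximations: approximating `φ` by some `ψ ∈ N` and
`ψ` by its expansion in `N` makes the Fourier series of `φ` converge to `φ`. The same identity
shows that the coefficients of any convergent expansion of `φ` are the `(m_l, φ)`.
-/

namespace BC

def dag3Hom : BC →+* BC where
  toFun := dag3
  map_one' := by ext <;> simp [dag3]
  map_mul' s t := by ext <;> simp [dag3]; ring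
  map_zero' := by ext <;> simp [dag3]
  map_add' s t := by ext <;> simp [dag3]; ring

theorem dag3_mul (s t : BC) : dag3 (s * t) = dag3 s * dag3 t :=
  map_mul dag3Hom s t

theorem dag3_sum {ι : Type*} (s : Finset ι) (f : ι → BC) :
    dag3 (∑ i ∈ s, f i) = ∑ i ∈ s, dag3 (f i) :=
  map_sum dag3Hom f s

def ofReal : ℝ →+* BC where
  toFun r := ⟨r, 0⟩
  map_one' := rfl
  map_mul' r s := by ext <;> simp
  map_zero' := by ext <;> simp
  map_add' r s := by ext <;> simp

theorem re_re_sum {ι : Type*} (s : Finset ι) (f : ι → BC) :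
    (∑ i ∈ s, f i).re.re = ∑ i ∈ s, (f i).re.re := by
  induction s using Finset.cons_induction <;> simp [*]

def normSq (w : BC) : ℝ := Complex.normSq w.re + Complex.normSq w.im

theorem normSq_nonneg (w : BC) : 0 ≤ normSq w :=
  add_nonneg (Complex.normSq_nonneg _) (Complex.normSq_nonneg _)

theorem normSq_eq_zero {w : BC} : normSq w = 0 ↔ w = 0 := by
  rw [normSq, add_eq_zero_iff_of_nonneg (Complex.normSq_nonneg _) (Complex.normSq_nonneg _),
    Complex.normSq_eq_zero, Complex.normSq_eq_zero, BC.ext_iff, zero_re, zero_im]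

theorem re_re_dag3_mul_self (w : BC) : (dag3 w * w).re.re = normSq w := by
  simp [dag3, normSq, Complex.normSq_apply]

theorem P1_re_add_P2_re (w : BC) : (P1 w).re + (P2 w).re = 2 * w.re.re := by
  simp only [P1, P2, Complex.sub_re, Complex.add_re, Complex.mul_re, Complex.I_re, Complex.I_im]
  ring

end BC

namespace BCInner

open BC
open scoped InnerProductSpace

variable {M : Type*} [AddCommGroup M] [Module BC M] (S : BCInner M)

def innerₗ (ψ : M) : M →ₗ[BC] BC where
  toFun := S.inner ψ
  map_add' := S.add_right ψ
  map_smul' s := S.smul_right s ψ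

theorem inner_sub_right (ψ φ χ : M) : S.inner ψ (φ - χ) = S.inner ψ φ - S.inner ψ χ :=
  map_sub (S.innerₗ ψ) φ χ

theorem inner_sum_right {ι : Type*} (ψ : M) (s : Finset ι) (f : ι → M) :
    S.inner ψ (∑ i ∈ s, f i) = ∑ i ∈ s, S.inner ψ (f i) :=
  map_sum (S.innerₗ ψ) f s

theorem inner_smul_left (s : BC) (ψ φ : M) : S.inner (s • ψ) φ = dag3 s * S.inner ψ φ := by
  rw [S.conj_symm, S.smul_right, dag3_mul, ← S.conj_symm]

theorem inner_sum_left {ι : Type*} (s : Finset ι) (f : ι → M) (φ : M) :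
    S.inner (∑ i ∈ s, f i) φ = ∑ i ∈ s, S.inner (f i) φ := by
  simp only [S.conj_symm _ φ, inner_sum_right, dag3_sum]

def reInner (ψ φ : M) : ℝ := (S.inner ψ φ).re.re

theorem reInner_add_left (ψ χ φ : M) :
    S.reInner (ψ + χ) φ = S.reInner ψ φ + S.reInner χ φ := by
  simp [reInner, S.conj_symm _ φ, S.add_right, dag3]

theorem reInner_ofReal_smul_left (r : ℝ) (ψ φ : M) :
    S.reInner (BC.ofReal r • ψ) φ = r * S.reInner ψ φ := by
  simp [reInner, inner_smul_left, BC.ofReal, dag3]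

theorem reInner_comm (ψ φ : M) : S.reInner ψ φ = S.reInner φ ψ := by
  simp [reInner, S.conj_symm ψ φ, dag3]

theorem reInner_self_nonneg (φ : M) : 0 ≤ S.reInner φ φ := by
  obtain ⟨-, h₁, -, h₂⟩ := S.hyper_pos φ
  have := P1_re_add_P2_re (S.inner φ φ)
  rw [reInner]
  linarith

theorem bnorm_eq_sqrt_reInner (φ : M) : bnorm S φ = √(S.reInner φ φ) := by
  rw [bnorm, P1_re_add_P2_re, Real.sqrt_mul zero_le_two, ← mul_assoc, one_div,
    inv_mul_cancel₀ (by positivity), one_mul, reInner]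

/-- `M` as a real pre-inner product space under `Re Re (ψ, φ)`; its norm is `bnorm S`. -/
def RealSpace (_ : BCInner M) : Type _ := M

instance : AddCommGroup S.RealSpace := inferInstanceAs (AddCommGroup M)

instance : Module ℝ S.RealSpace := Module.compHom M BC.ofReal

def toRealSpace : M ≃+ S.RealSpace := AddEquiv.refl M

@[reducible]
def realCore : PreInnerProductSpace.Core ℝ S.RealSpace where
  inner x y := S.reInner x y
  conj_inner_symm x y := S.reInner_comm y x
  re_inner_nonneg := S.reInner_self_nonneg
  add_left := S.reInner_add_left
  smul_left x y r := S.reInner_ofReal_smul_left r x y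

noncomputable instance : SeminormedAddCommGroup S.RealSpace :=
  @InnerProductSpace.Core.toSeminormedAddCommGroup ℝ _ _ _ _ S.realCore

noncomputable instance : InnerProductSpace ℝ S.RealSpace := InnerProductSpace.ofCore S.realCore

theorem bnorm_eq_norm (φ : M) : bnorm S φ = ‖S.toRealSpace φ‖ :=
  S.bnorm_eq_sqrt_reInner φ

theorem reInner_eq_inner (ψ φ : M) :
    S.reInner ψ φ = ⟪S.toRealSpace ψ, S.toRealSpace φ⟫_ℝ :=
  rfl

theorem bnorm_nonneg (φ : M) : 0 ≤ bnorm S φ := by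
  rw [bnorm_eq_norm]
  exact norm_nonneg _

theorem bnorm_add_le (ψ φ : M) : bnorm S (ψ + φ) ≤ bnorm S ψ + bnorm S φ := by
  simpa only [bnorm_eq_norm, map_add] using norm_add_le (S.toRealSpace ψ) (S.toRealSpace φ)

theorem bnorm_sq (φ : M) : bnorm S φ ^ 2 = S.reInner φ φ := by
  rw [bnorm_eq_norm, reInner_eq_inner, real_inner_self_eq_norm_sq]

theorem bnorm_add_sq_of_reInner_eq_zero {ψ φ : M} (h : S.reInner ψ φ = 0) :
    bnorm S (ψ + φ) ^ 2 = bnorm S ψ ^ 2 + bnorm S φ ^ 2 := by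
  simp only [bnorm_eq_norm, map_add, sq]
  exact norm_add_sq_eq_norm_sq_add_norm_sq_real h

variable {ι : Type*} [DecidableEq ι]

def Orthonormal (m : ι → M) : Prop :=
  ∀ l p, S.inner (m l) (m p) = if l = p then 1 else 0

def fourierSum (m : ι → M) (s : Finset ι) (φ : M) : M :=
  ∑ p ∈ s, S.inner (m p) φ • m p

namespace Orthonormal

variable {S} {m : ι → M}

theorem inner_sum_smul (hm : S.Orthonormal m) (α : ι → BC) {s : Finset ι} {l : ι}
    (hl : l ∈ s) :
    S.inner (m l) (∑ p ∈ s, α p • m p) = α l := by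
  simp [inner_sum_right, S.smul_right, hm l, hl]

theorem inner_sum_smul_sub_fourierSum (hm : S.Orthonormal m) (β : ι → BC) (s : Finset ι)
    (φ : M) :
    S.inner (∑ p ∈ s, β p • m p) (φ - S.fourierSum m s φ) = 0 := by
  refine (inner_sum_left S _ _ _).trans (Finset.sum_eq_zero fun p hp => ?_)
  rw [inner_smul_left, inner_sub_right, fourierSum, hm.inner_sum_smul _ hp, sub_self, mul_zero]

theorem bnorm_sum_smul_sq (hm : S.Orthonormal m) (δ : ι → BC) (s : Finset ι) :
    bnorm S (∑ p ∈ s, δ p • m p) ^ 2 = ∑ p ∈ s, normSq (δ p) := by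
  rw [bnorm_sq, reInner, inner_sum_left, re_re_sum]
  refine Finset.sum_congr rfl fun p hp => ?_
  rw [inner_smul_left, hm.inner_sum_smul _ hp, re_re_dag3_mul_self]

theorem bnorm_sub_sum_smul_sq (hm : S.Orthonormal m) (α : ι → BC) (s : Finset ι)
    (φ : M) :
    bnorm S (φ - ∑ p ∈ s, α p • m p) ^ 2 =
      bnorm S (φ - S.fourierSum m s φ) ^ 2 + ∑ p ∈ s, normSq (S.inner (m p) φ - α p) := by
  have hsplit : φ - ∑ p ∈ s, α p • m p =
      (φ - S.fourierSum m s φ) + ∑ p ∈ s, (S.inner (m p) φ - α p) • m p := by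
    simp only [fourierSum, sub_smul, Finset.sum_sub_distrib]
    abel
  have horth :
      S.reInner (φ - S.fourierSum m s φ) (∑ p ∈ s, (S.inner (m p) φ - α p) • m p) = 0 := by
    rw [reInner_comm, reInner, hm.inner_sum_smul_sub_fourierSum]
    rfl
  rw [hsplit, bnorm_add_sq_of_reInner_eq_zero S horth, hm.bnorm_sum_smul_sq]

theorem bnorm_sub_fourierSum_le (hm : S.Orthonormal m) (α : ι → BC) (s : Finset ι)
    (φ : M) :
    bnorm S (φ - S.fourierSum m s φ) ≤ bnorm S (φ - ∑ p ∈ s, α p • m p) := by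
  refine (pow_le_pow_iff_left₀ (bnorm_nonneg S _) (bnorm_nonneg S _) two_ne_zero).1 ?_
  rw [hm.bnorm_sub_sum_smul_sq]
  exact le_add_of_nonneg_right (Finset.sum_nonneg fun p _ => normSq_nonneg _)

theorem normSq_inner_sub_le (hm : S.Orthonormal m) (α : ι → BC) {s : Finset ι} {l : ι}
    (hl : l ∈ s) (φ : M) :
    normSq (S.inner (m l) φ - α l) ≤ bnorm S (φ - ∑ p ∈ s, α p • m p) ^ 2 := by
  rw [hm.bnorm_sub_sum_smul_sq]
  exact (Finset.single_le_sum (f := fun p => normSq (S.inner (m p) φ - α p))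
    (fun p _ => normSq_nonneg _) hl).trans (le_add_of_nonneg_left (sq_nonneg _))

end Orthonormal

section Expansion

open Filter Topology Finset

variable {S} {m : ℕ → M}

theorem Orthonormal.tendsto_bnorm_sub_fourierSum (hm : S.Orthonormal m) (φ : M)
    (happrox : ∀ ε > 0, ∃ ψ, bnorm S (φ - ψ) < ε ∧ ∃ α : ℕ → BC,
      Tendsto (fun n => bnorm S (ψ - ∑ l ∈ range n, α l • m l)) atTop (𝓝 0)) :
    Tendsto (fun n => bnorm S (φ - S.fourierSum m (range n) φ)) atTop (𝓝 0) := by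
  refine Metric.tendsto_atTop.2 fun ε hε => ?_
  obtain ⟨ψ, hψ, α, hα⟩ := happrox (ε / 2) (half_pos hε)
  obtain ⟨n₀, hn₀⟩ := Metric.tendsto_atTop.1 hα (ε / 2) (half_pos hε)
  refine ⟨n₀, fun n hn => ?_⟩
  have hψα := hn₀ n hn
  rw [Real.dist_0_eq_abs, abs_of_nonneg (bnorm_nonneg S _)] at hψα ⊢
  calc bnorm S (φ - S.fourierSum m (range n) φ)
      ≤ bnorm S (φ - ∑ l ∈ range n, α l • m l) := hm.bnorm_sub_fourierSum_le α _ φ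
    _ ≤ bnorm S (φ - ψ) + bnorm S (ψ - ∑ l ∈ range n, α l • m l) := by
        simpa only [sub_add_sub_cancel] using
          bnorm_add_le S (φ - ψ) (ψ - ∑ l ∈ range n, α l • m l)
    _ < ε := by linarith

theorem Orthonormal.eq_inner_of_tendsto (hm : S.Orthonormal m) {φ : M} {α : ℕ → BC}
    (hα : Tendsto (fun n => bnorm S (φ - ∑ l ∈ range n, α l • m l)) atTop (𝓝 0)) :
    α = fun l => S.inner (m l) φ := by
  funext l
  have hle : normSq (S.inner (m l) φ - α l) ≤ 0 := by
    refine ge_of_tendsto (by simpa using hα.pow 2) (eventually_atTop.2 ⟨l + 1, fun n hn => ?_⟩)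
    exact hm.normSq_inner_sub_le α (mem_range.2 hn) φ
  exact (sub_eq_zero.1 (normSq_eq_zero.1 (le_antisymm hle (normSq_nonneg _)))).symm

end Expansion

end BCInner

theorem bicomplex_dense_basis_general {M : Type*} [AddCommGroup M] [Module BC M]
    (S : BCInner M)
    (N : Submodule BC M)
    (hdense : ∀ φ : M, ∀ ε > 0, ∃ ψ ∈ N, bnorm S (φ - ψ) < ε)
    (m : ℕ → M)
    (horth : ∀ l p : ℕ, S.inner (m l) (m p) = if l = p then 1 else 0)
    (hbasisN : ∀ ψ ∈ N, ∃! α : ℕ → BC,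
      Filter.Tendsto (fun n => bnorm S (ψ - ∑ l ∈ Finset.range n, α l • m l))
        Filter.atTop (nhds 0)) :
    (∀ φ : M, ∃! α : ℕ → BC,
      Filter.Tendsto (fun n => bnorm S (φ - ∑ l ∈ Finset.range n, α l • m l))
        Filter.atTop (nhds 0)) ∧
    (∀ φ : M,
      Filter.Tendsto (fun n => bnorm S (φ - ∑ l ∈ Finset.range n, S.inner (m l) φ • m l))
        Filter.atTop (nhds 0)) := by
  have hm : S.Orthonormal m := horth
  have hfourier (φ : M) :
      Filter.Tendsto (fun n => bnorm S (φ - S.fourierSum m (Finset.range n) φ))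
        Filter.atTop (nhds 0) :=
    hm.tendsto_bnorm_sub_fourierSum φ fun ε hε => by
      obtain ⟨ψ, hψN, hψ⟩ := hdense φ ε hε
      exact ⟨ψ, hψ, (hbasisN ψ hψN).exists⟩
  exact ⟨fun φ => ⟨_, hfourier φ, fun α hα => hm.eq_inner_of_tendsto hα⟩, hfourier⟩

/-- an orthonormal Schauder basis of a dense subspace `N` of a bicomplex
Hilbert space `M` is an orthonormal Schauder basis of `M`; in particular every `φ ∈ M`
satisfies `φ = Σ ⟨m_l|φ⟩ m_l`. -/
theorem bicomplex_dense_basis {M : Type*} [AddCommGroup M] [Module BC M]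
    (S : BCInner M) (hcomplete : BCComplete S)
    (N : Submodule BC M)
    (hdense : ∀ φ : M, ∀ ε > 0, ∃ ψ ∈ N, bnorm S (φ - ψ) < ε)
    (m : ℕ → M) (hmem : ∀ l, m l ∈ N)
    (horth : ∀ l p : ℕ, S.inner (m l) (m p) = if l = p then 1 else 0)
    (hbasisN : ∀ ψ ∈ N, ∃! α : ℕ → BC,
      Filter.Tendsto (fun n => bnorm S (ψ - ∑ l ∈ Finset.range n, α l • m l))
        Filter.atTop (nhds 0)) :
    (∀ φ : M, ∃! α : ℕ → BC,
      Filter.Tendsto (fun n => bnorm S (φ - ∑ l ∈ Finset.range n, α l • m l))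
        Filter.atTop (nhds 0)) ∧
    (∀ φ : M,
      Filter.Tendsto (fun n => bnorm S (φ - ∑ l ∈ Finset.range n, S.inner (m l) φ • m l))
        Filter.atTop (nhds 0)) :=
  bicomplex_dense_basis_general S N hdense m horth hbasisN
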